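/- Assume that (H, G₁) satisfies Condition A with constant ζ and Condition B with constant ζ for some integer ζ ≥ 1. Then P⁻¹P⁻¹ ⊆ P⁻¹: the product of two (H, G₁)-negative elements of G is (H, G₁)-negative. -/

import Mathlib

namespace GarsideOrder

variable {G : Type*} [Group G]

/-- `a ≤_R b` iff `b * a⁻¹ ∈ M`. -/
def leR (M : Submonoid G) (a b : G) : Prop := b * a⁻¹ ∈ M

/-- `a ≤_L b` iff `a⁻¹ * b ∈ M`. -/
def leL (M : Submonoid G) (a b : G) : Prop := a⁻¹ * b ∈ M

/-- Right divisors (in `M`) of `a`. -/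
def DivR (M : Submonoid G) (a : G) : Set G := {b : G | b ∈ M ∧ leR M b a}

/-- Left divisors (in `M`) of `a`. -/
def DivL (M : Submonoid G) (a : G) : Set G := {b : G | b ∈ M ∧ leL M b a}

/-- `a` is balanced if its sets of right and left divisors coincide. -/
def Balanced (M : Submonoid G) (a : G) : Prop := DivR M a = DivL M a

open Classical in
/-- The `N`-tail of `a`: the unique `b ∈ N` having the same right divisors lying in `N`
as `a` (w.r.t. the divisibility of the ambient monoid `M`). -/
noncomputable def tail (M N : Submonoid G) (a : G) : G :=
  if h : ∃ b : G, b ∈ N ∧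
      {c : G | c ∈ N ∧ leR M c a} = {c : G | c ∈ N ∧ leR M c b} then
    h.choose
  else 1

/-- Iterated stripping of alternating tails: first the `M₁`-tail, then the `N`-tail, etc. -/
noncomputable def strip (M M₁ N : Submonoid G) : ℕ → G → G
  | 0, a => a
  | i + 1, a =>
      strip M M₁ N i a *
        (tail M (if i % 2 = 0 then M₁ else N) (strip M M₁ N i a))⁻¹

/-- The breadth of `a`: the length of the alternating form of `a`, i.e. the least `p ≥ 1`
such that stripping alternating tails `p` times reaches `1`. -/
noncomputable def bh (M M₁ N : Submonoid G) (a : G) : ℕ :=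
  sInf {p : ℕ | 1 ≤ p ∧ strip M M₁ N p a = 1}

/-- The depth of `a`: `(bh a - 1)/2` if `bh a` is odd, `bh a / 2` if `bh a` is even;
in both cases this is `bh a / 2` with natural division. -/
noncomputable def dpt (M M₁ N : Submonoid G) (a : G) : ℕ := bh M M₁ N a / 2

/-- `a ∈ M` is unmovable if `Δ` does not right-divide it. -/
def Unmovable (M : Submonoid G) (Δ a : G) : Prop := a ∈ M ∧ ¬ leR M Δ a

/-- `α` is `(H, G₁)`-negative: its `Δ`-form is `a Δ^{-k}` with `k ≥ 1` and
`dpt a < dpt (Δ^k)`. -/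
def Negative (M M₁ N : Submonoid G) (Δ : G) (α : G) : Prop :=
  ∃ a : G, ∃ k : ℕ, Unmovable M Δ a ∧ 1 ≤ k ∧ α = a * (Δ ^ k)⁻¹ ∧
    dpt M M₁ N a < dpt M M₁ N (Δ ^ k)

/-- `α` is `(H, G₁)`-positive if `α⁻¹` is `(H, G₁)`-negative. -/
def Positive (M M₁ N : Submonoid G) (Δ : G) (α : G) : Prop :=
  Negative M M₁ N Δ α⁻¹

/-- The set `Θ` of theta elements `θ^k a₀`, `k ≥ 1`, `a₀ ∈ M₁`. -/
def thetaSet (M₁ : Submonoid G) (θ : G) : Set G :=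
  {x : G | ∃ k : ℕ, 1 ≤ k ∧ ∃ a₀ ∈ M₁, x = θ ^ k * a₀}

/-- `Θ̄ = Θ ∪ M₁`. -/
def thetaBar (M₁ : Submonoid G) (θ : G) : Set G := thetaSet M₁ θ ∪ (M₁ : Set G)

/-- Condition A with constant `ζ`: `dpt (Δ^k) = ζ k + 1` for all `k ≥ 1`. -/
def CondA (M M₁ N : Submonoid G) (Δ : G) (ζ : ℕ) : Prop :=
  ∀ k : ℕ, 1 ≤ k → dpt M M₁ N (Δ ^ k) = ζ * k + 1

/-- Condition B with constant `ζ`. -/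
def CondB (M M₁ N : Submonoid G) (Δ θ : G) (ζ : ℕ) : Prop :=
  ∀ a b c : G, ∀ t : ℤ,
    Unmovable M Δ a → Unmovable M Δ b →
    ¬(a ∈ thetaBar M₁ θ ∧ b ∈ thetaBar M₁ θ) →
    Unmovable M Δ c → a * b = c * Δ ^ t →
    ∃ ε : ℕ, ε ≤ 1 ∧
      (dpt M M₁ N c : ℤ) =
        (dpt M M₁ N a : ℤ) + (dpt M M₁ N b : ℤ) - (ζ : ℤ) * t - (ε : ℤ) ∧
      ((a ∈ thetaSet M₁ θ ∨ b ∈ thetaSet M₁ θ ∨ c ∈ M₁) → ε = 1)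

/-- A Garside structure with group of fractions the subgroup `car`. -/
structure IsGarsideOn (car : Subgroup G) (M : Submonoid G) (Δ : G) : Prop where
  M_sub : (M : Set G) ⊆ (car : Set G)
  delta_mem : Δ ∈ M
  units_trivial : ∀ x : G, x ∈ M → x⁻¹ ∈ M → x = 1
  noetherian : ∀ a ∈ M, ∃ n : ℕ, 1 ≤ n ∧ ∀ l : List G,
      (∀ x ∈ l, x ∈ M ∧ x ≠ 1) → l.prod = a → l.length ≤ n
  balanced : Balanced M Δ
  div_finite : (DivR M Δ).Finite
  div_gen_monoid : Submonoid.closure (DivR M Δ) = M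
  div_gen_group : Subgroup.closure (DivR M Δ) = car
  meet : ∀ a ∈ car, ∀ b ∈ car, ∃ c ∈ car, leR M c a ∧ leR M c b ∧
      ∀ d ∈ car, leR M d a → leR M d b → leR M d c
  join : ∀ a ∈ car, ∀ b ∈ car, ∃ c ∈ car, leR M a c ∧ leR M b c ∧
      ∀ d ∈ car, leR M a d → leR M b d → leR M c d

/-- The parabolic submonoid determined by `δ`: the submonoid generated by `Div(δ)`. -/
def parM (M : Submonoid G) (δ : G) : Submonoid G := Submonoid.closure (DivR M δ)

/-- The parabolic subgroup determined by `δ`: the subgroup generated by `Div(δ)`. -/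
def parG (M : Submonoid G) (δ : G) : Subgroup G := Subgroup.closure (DivR M δ)

/-- `δ` determines a parabolic substructure of `(G, M, Δ)`. -/
structure IsParabolic (M : Submonoid G) (Δ δ : G) : Prop where
  mem : δ ∈ M
  balanced : Balanced M δ
  div_eq : DivR M δ = DivR M Δ ∩ (parM M δ : Set G)

/-- The setting of Section 3: a Garside structure `(car, M, Δ)` together with two
parabolic substructures `(H, N, Λ)` (given by `lam`) and `(G₁, M₁, Δ₁)` (given by `δ1`),
with `N ≠ M`, `M₁ ≠ M`, `N ∪ M₁` generating `M`, `Δ` central, `Δ₁` central in `G₁`. -/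
structure Setting (G : Type*) [Group G] where
  car : Subgroup G
  M : Submonoid G
  Δ : G
  δ1 : G
  lam : G
  garside : IsGarsideOn car M Δ
  par1 : IsParabolic M Δ δ1
  parH : IsParabolic M Δ lam
  N_ne : parM M lam ≠ M
  M1_ne : parM M δ1 ≠ M
  unionGen : Submonoid.closure ((parM M lam : Set G) ∪ (parM M δ1 : Set G)) = M
  delta_central : ∀ g ∈ car, Δ * g = g * Δ
  delta1_central : ∀ g ∈ parG M δ1, δ1 * g = g * δ1

namespace Setting

variable (S : Setting G)

/-- The parabolic submonoid `M₁`. -/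
def M₁ : Submonoid G := parM S.M S.δ1

/-- The parabolic submonoid `N`. -/
def Nsub : Submonoid G := parM S.M S.lam

/-- The parabolic subgroup `G₁`. -/
def G₁ : Subgroup G := parG S.M S.δ1

/-- `θ = Δ Δ₁⁻¹`. -/
def theta : G := S.Δ * S.δ1⁻¹

/-- The set of `(H, G₁)`-negative elements. -/
def Neg : Set G := {α : G | Negative S.M S.M₁ S.Nsub S.Δ α}

/-- The set of `(H, G₁)`-positive elements. -/
def Pos : Set G := {α : G | α⁻¹ ∈ S.Neg}

/-- Condition A. -/
def condA (ζ : ℕ) : Prop := CondA S.M S.M₁ S.Nsub S.Δ ζ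

/-- Condition B. -/
def condB (ζ : ℕ) : Prop := CondB S.M S.M₁ S.Nsub S.Δ S.theta ζ

/-- `(H, G₁)` is a Dehornoy structure: `PP ⊆ P`, `G₁ P G₁ ⊆ P`, and the group is the
disjoint union of `P`, `P⁻¹` and `G₁`. -/
def IsDehornoy : Prop :=
  (∀ α ∈ S.Pos, ∀ β ∈ S.Pos, α * β ∈ S.Pos) ∧
  (∀ g₁ ∈ S.G₁, ∀ α ∈ S.Pos, ∀ g₂ ∈ S.G₁, g₁ * α * g₂ ∈ S.Pos) ∧
  (∀ α ∈ S.car, α ∈ S.Pos ∨ α ∈ S.Neg ∨ α ∈ S.G₁) ∧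
  (∀ α : G, ¬(α ∈ S.Pos ∧ α ∈ S.Neg)) ∧
  (∀ α : G, ¬(α ∈ S.Pos ∧ α ∈ S.G₁)) ∧
  (∀ α : G, ¬(α ∈ S.Neg ∧ α ∈ S.G₁))

end Setting

end GarsideOrder

/-!
Write `α = a Δ^(-k)` and `β = b Δ^(-l)` in `Δ`-form. As `Δ` is central, `αβ = (ab) Δ^(-(k+l))`,
and if `ab = c Δ^t` is the `Δ`-form then `αβ = c Δ^(-(k+l-t))`; what has to be shown is
`t < k + l` and `dpt c < dpt Δ^(k+l-t) = ζ(k+l-t) + 1`.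

If `a` or `b` lies outside `Θ̄`, Condition B gives `dpt c = dpt a + dpt b - ζt - ε`, and
Condition A gives `dpt a ≤ ζk`, `dpt b ≤ ζl`. Hence `t ≤ k + l`, and `t = k + l` would force
`dpt c = 0`, i.e. `c ∈ M₁`, whence `ε = 1`, which is impossible.

If `a = θ^p a₀` and `b = θ^q b₀` both lie in `Θ̄`, then `θ` commutes with `G₁`, so
`ab = θ^(p+q) a₀ b₀`, and the `Δ`-form of `θ^n x` with `x ∈ M₁` is again of the shape
`θ^(n-t) c₀ Δ^t` or `c₀ Δ^n` with `c₀ ∈ M₁`. The key fact is `dpt (θ^m x) = dpt Δ^m` for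
`x ∈ M₁`: both elements have the same `M₁`-tail quotient `θ^m`, because no nontrivial element of
`M₁` right-divides `θ^m`. This in turn holds because `Δ₁^m` is the largest divisor of `Δ^m`
lying in `M₁`, a consequence of the closure of `M₁` under divisors. As `m ↦ dpt Δ^m` is strictly
increasing, `dpt a < dpt Δ^k` gives `p < k`, `q < l`, and the bound follows.
-/

namespace GarsideOrder

variable {G : Type*} [Group G]

section Divisibility

variable {M : Submonoid G} {a b c : G}

theorem leR_refl (M : Submonoid G) (a : G) : leR M a a := by
  simp [leR, M.one_mem]

theorem leR_trans (hab : leR M a b) (hbc : leR M b c) : leR M a c := by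
  simpa [leR, mul_assoc] using M.mul_mem hbc hab

theorem leR_mul_right_iff : leR M (a * c) (b * c) ↔ leR M a b := by
  simp [leR, mul_assoc]

theorem leR_mul_left (ha : a ∈ M) (b : G) : leR M b (a * b) := by
  simpa [leR] using ha

theorem leR_one_left : leR M 1 a ↔ a ∈ M := by
  simp [leR]

theorem mem_of_leR (ha : a ∈ M) (h : leR M a b) : b ∈ M := by
  simpa [leR] using M.mul_mem h ha

theorem Balanced.mul_inv_mem_divR {d : G} (hd : Balanced M d) (hb : b ∈ DivR M d)
    (hc : c ∈ M) (hcb : leR M c b) : b * c⁻¹ ∈ DivR M d := by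
  rw [hd] at hb ⊢
  exact ⟨hcb, by simpa [leL, mul_assoc] using M.mul_mem hc hb.2⟩

end Divisibility

namespace IsGarsideOn

variable {car : Subgroup G} {M : Submonoid G} {Δ a b d x : G}

theorem leR_antisymm (hM : IsGarsideOn car M Δ) (hab : leR M a b) (hba : leR M b a) :
    a = b :=
  mul_inv_eq_one.mp (hM.units_trivial _ hba (by simpa [leR] using hab))

theorem eq_one_of_leR_one (hM : IsGarsideOn car M Δ) (hd : d ∈ M) (h : leR M d 1) : d = 1 :=
  hM.leR_antisymm h (leR_one_left.mpr hd)

theorem exists_join (hM : IsGarsideOn ⊤ M Δ) (a b : G) :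
    ∃ c, leR M a c ∧ leR M b c ∧ ∀ d, leR M a d → leR M b d → leR M c d := by
  obtain ⟨c, -, hac, hbc, hc⟩ := hM.join a (Subgroup.mem_top a) b (Subgroup.mem_top b)
  exact ⟨c, hac, hbc, fun d => hc d (Subgroup.mem_top d)⟩

end IsGarsideOn

-- `sSup` of an unbounded set is `0`; the bound exists when `M` is Noetherian.
noncomputable def maxLen (M : Submonoid G) (a : G) : ℕ :=
  sSup {n | ∃ l : List G, (∀ x ∈ l, x ∈ M ∧ x ≠ 1) ∧ l.prod = a ∧ l.length = n}

namespace IsGarsideOn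

variable {car : Subgroup G} {M : Submonoid G} {Δ a b d x : G}

theorem bddAbove_factorLengths (hM : IsGarsideOn car M Δ) (ha : a ∈ M) :
    BddAbove {n | ∃ l : List G, (∀ x ∈ l, x ∈ M ∧ x ≠ 1) ∧ l.prod = a ∧ l.length = n} := by
  obtain ⟨n, -, hn⟩ := hM.noetherian a ha
  exact ⟨n, fun m ⟨l, hl, hp, hm⟩ => hm ▸ hn l hl hp⟩

theorem length_le_maxLen (hM : IsGarsideOn car M Δ) (ha : a ∈ M) {l : List G}
    (hl : ∀ x ∈ l, x ∈ M ∧ x ≠ 1) (hprod : l.prod = a) : l.length ≤ maxLen M a :=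
  le_csSup (hM.bddAbove_factorLengths ha) ⟨l, hl, hprod, rfl⟩

theorem exists_list_length_eq_maxLen (hM : IsGarsideOn car M Δ) (ha : a ∈ M) :
    ∃ l : List G, (∀ x ∈ l, x ∈ M ∧ x ≠ 1) ∧ l.prod = a ∧ l.length = maxLen M a := by
  refine Nat.sSup_mem ?_ (hM.bddAbove_factorLengths ha)
  by_cases h1 : a = 1
  · exact ⟨0, [], by simp, by simp [h1], rfl⟩
  · exact ⟨1, [a], by simpa using ⟨ha, h1⟩, by simp, rfl⟩

theorem maxLen_add_le (hM : IsGarsideOn car M Δ) (ha : a ∈ M) (hb : b ∈ M) :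
    maxLen M a + maxLen M b ≤ maxLen M (a * b) := by
  obtain ⟨la, hla, rfl, hna⟩ := hM.exists_list_length_eq_maxLen ha
  obtain ⟨lb, hlb, rfl, hnb⟩ := hM.exists_list_length_eq_maxLen hb
  rw [← hna, ← hnb, ← List.length_append]
  refine hM.length_le_maxLen (M.mul_mem ha hb) ?_ (List.prod_append ..)
  intro x hx
  rcases List.mem_append.mp hx with h | h
  exacts [hla x h, hlb x h]

theorem one_le_maxLen (hM : IsGarsideOn car M Δ) (ha : a ∈ M) (ha1 : a ≠ 1) :
    1 ≤ maxLen M a :=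
  hM.length_le_maxLen (l := [a]) ha (by simpa using ⟨ha, ha1⟩) (by simp)

theorem maxLen_le_of_leR (hM : IsGarsideOn car M Δ) (hb : b ∈ M) (hba : leR M b a) :
    maxLen M b ≤ maxLen M a := by
  have := hM.maxLen_add_le hba hb
  simp only [inv_mul_cancel_right] at this
  omega

theorem maxLen_lt_of_leR (hM : IsGarsideOn car M Δ) (hb : b ∈ M) (hba : leR M b a)
    (hne : b ≠ a) : maxLen M b < maxLen M a := by
  have h1 := hM.one_le_maxLen hba (mt mul_inv_eq_one.mp hne.symm)
  have h2 := hM.maxLen_add_le hba hb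
  simp only [inv_mul_cancel_right] at h2
  omega

theorem exists_eq_mul_pow_not_leR (hM : IsGarsideOn car M Δ) (hd : d ∈ M) (hd1 : d ≠ 1)
    (hx : x ∈ M) : ∃ t, leR M (d ^ t) x ∧ ¬ leR M d (x * (d ^ t)⁻¹) := by
  by_contra! h
  have hall : ∀ t, leR M (d ^ t) x := fun t => by
    induction t with
    | zero => simpa [leR_one_left] using hx
    | succ t ih =>
      have := (leR_mul_right_iff (c := d ^ t)).mpr (h t ih)
      rwa [inv_mul_cancel_right, ← pow_succ'] at this
  have hlen : maxLen M x + 1 ≤ maxLen M (d ^ (maxLen M x + 1)) :=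
    (List.length_replicate ..).symm.le.trans <| hM.length_le_maxLen (M.pow_mem hd _)
      (fun y hy => List.eq_of_mem_replicate hy ▸ ⟨hd, hd1⟩) (List.prod_replicate ..)
  have := hM.maxLen_le_of_leR (M.pow_mem hd _) (hall (maxLen M x + 1))
  omega

theorem exists_unmovable_mul_pow (hM : IsGarsideOn car M Δ) (hΔ1 : Δ ≠ 1) (ha : a ∈ M) :
    ∃ c t, Unmovable M Δ c ∧ a = c * Δ ^ t := by
  obtain ⟨t, ht, hnt⟩ := hM.exists_eq_mul_pow_not_leR hM.delta_mem hΔ1 ha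
  exact ⟨a * (Δ ^ t)⁻¹, t, ⟨ht, hnt⟩, by group⟩

theorem exists_divR_leR_of_leR_pow_succ (hM : IsGarsideOn ⊤ M Δ)
    (hΔ : Δ ∈ Subgroup.center G) (hx : x ∈ M) {k : ℕ} (h : leR M x (Δ ^ (k + 1))) :
    ∃ s ∈ DivR M Δ, leR M s x ∧ leR M (x * s⁻¹) (Δ ^ k) := by
  have hc : ∀ n g, Δ ^ n * g = g * Δ ^ n := fun n g =>
    (Subgroup.mem_center_iff.mp (Subgroup.pow_mem _ hΔ n) g).symm
  -- `y` is the complement of `x` in `Δ^(k+1)`; the simple `s` is cut out by the join `Δ ∨ y`.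
  obtain ⟨y, hyM, hxy⟩ : ∃ y ∈ M, x * y = Δ ^ (k + 1) :=
    ⟨_, h, by rw [← mul_assoc, ← hc, mul_inv_cancel_right]⟩
  obtain ⟨j, hΔj, hyj, hj⟩ := hM.exists_join Δ y
  have hjΔy : leR M j (Δ * y) := by
    refine hj _ ?_ (leR_mul_left hM.delta_mem y)
    rw [leR, ← pow_one Δ, hc, mul_inv_cancel_right]
    exact hyM
  have hjΔk : leR M j (Δ ^ (k + 1)) := by
    refine hj _ ?_ ?_
    · rw [leR, pow_succ, mul_inv_cancel_right]
      exact M.pow_mem hM.delta_mem k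
    · rw [leR, ← hxy, mul_inv_cancel_right]
      exact hx
  refine ⟨j * y⁻¹, ⟨hyj, by simpa [leR, mul_assoc] using hjΔy⟩, ?_, ?_⟩
  · rw [leR, mul_inv_rev, inv_inv, ← mul_assoc, hxy]
    exact hjΔk
  · have : Δ ^ k * (x * (j * y⁻¹)⁻¹)⁻¹ = j * Δ⁻¹ :=
      calc Δ ^ k * (x * (j * y⁻¹)⁻¹)⁻¹ = Δ ^ k * j * (x * y)⁻¹ := by group
        _ = j * Δ ^ k * (Δ ^ k * Δ)⁻¹ := by rw [hc, hxy, pow_succ]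
        _ = j * Δ⁻¹ := by group
    rw [leR, this]
    exact hΔj

end IsGarsideOn

section Parabolic

variable {M N : Submonoid G} {Δ δ a b d x y : G}

theorem parM_le (M : Submonoid G) (δ : G) : parM M δ ≤ M :=
  Submonoid.closure_le.2 fun _ h => h.1

theorem subset_parM (M : Submonoid G) (δ : G) : DivR M δ ⊆ parM M δ :=
  Submonoid.subset_closure

namespace IsParabolic

variable (hδ : IsParabolic M Δ δ)
include hδ

theorem self_mem_divR : δ ∈ DivR M δ := ⟨hδ.mem, leR_refl M δ⟩

theorem self_mem_parM : δ ∈ parM M δ := subset_parM M δ hδ.self_mem_divR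

theorem divR_subset : DivR M δ ⊆ DivR M Δ := fun x hx => by
  rw [hδ.div_eq] at hx
  exact hx.1

theorem mul_inv_mem_divR (hx : x ∈ DivR M δ) : δ * x⁻¹ ∈ DivR M δ :=
  hδ.balanced.mul_inv_mem_divR hδ.self_mem_divR hx.1 hx.2

theorem conj_mem_divR (hx : x ∈ DivR M δ) : δ * x * δ⁻¹ ∈ DivR M δ := by
  simpa [mul_assoc] using hδ.mul_inv_mem_divR (hδ.mul_inv_mem_divR hx)

theorem conj_mem_parM (hx : x ∈ parM M δ) : δ * x * δ⁻¹ ∈ parM M δ := by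
  induction hx using Submonoid.closure_induction with
  | mem y hy => exact subset_parM M δ (hδ.conj_mem_divR hy)
  | one => simp
  | mul y z _ _ hy hz => simpa [mul_assoc] using Submonoid.mul_mem _ hy hz

theorem conj_pow_mem_parM (hx : x ∈ parM M δ) (n : ℕ) :
    δ ^ n * x * (δ ^ n)⁻¹ ∈ parM M δ := by
  induction n generalizing x with
  | zero => simpa using hx
  | succ n ih => simpa [pow_succ, mul_assoc] using ih (hδ.conj_mem_parM hx)

theorem exists_pow_mul_inv_mem_parM (hx : x ∈ parM M δ) : ∃ m, δ ^ m * x⁻¹ ∈ parM M δ := by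
  induction hx using Submonoid.closure_induction with
  | mem y hy => exact ⟨1, by simpa using subset_parM M δ (hδ.mul_inv_mem_divR hy)⟩
  | one => exact ⟨0, by simp⟩
  | mul y z _ _ hy hz =>
    obtain ⟨m, hm⟩ := hy
    obtain ⟨n, hn⟩ := hz
    refine ⟨m + n, ?_⟩
    have := Submonoid.mul_mem _ (hδ.conj_pow_mem_parM hn m) hm
    simpa [pow_add, mul_assoc] using this

end IsParabolic

namespace IsGarsideOn

variable (hM : IsGarsideOn ⊤ M Δ) (hδ : IsParabolic M Δ δ)
include hM hδ

theorem mem_divR_of_leR (hx : x ∈ parM M δ) (hd : d ∈ DivR M Δ) (hdx : leR M d x) :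
    d ∈ DivR M δ := by
  induction hx using Submonoid.closure_induction_right generalizing d with
  | one =>
    rw [hM.eq_one_of_leR_one hd.1 hdx]
    exact ⟨M.one_mem, leR_one_left.mpr hδ.mem⟩
  | mul_right x hx s hs ih =>
    -- the join `P = d ∨ s` is simple and `P s⁻¹` right-divides `x`, so `P ∈ Div δ`
    obtain ⟨P, hdP, hsP, hP⟩ := hM.exists_join d s
    have hPΔ : P ∈ DivR M Δ := ⟨mem_of_leR hd.1 hdP, hP _ hd.2 (hδ.divR_subset hs).2⟩
    have hPx : leR M (P * s⁻¹) x := by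
      rw [← leR_mul_right_iff (c := s), inv_mul_cancel_right]
      exact hP _ hdx (leR_mul_left (parM_le M δ hx) s)
    have hPs := ih (hM.balanced.mul_inv_mem_divR hPΔ hs.1 hsP) hPx
    have hPδ : P ∈ DivR M δ := by
      rw [hδ.div_eq]
      refine ⟨hPΔ, ?_⟩
      simpa using Submonoid.mul_mem _ (subset_parM M δ hPs) (subset_parM M δ hs)
    exact ⟨hd.1, leR_trans hdP hPδ.2⟩

theorem mem_parM_of_leR (hx : x ∈ parM M δ) (hd : d ∈ M) (hdx : leR M d x) :
    d ∈ parM M δ := by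
  rw [← hM.div_gen_monoid] at hd
  induction hd using Submonoid.closure_induction_right generalizing x with
  | one => exact Submonoid.one_mem _
  | mul_right d hd g hg ih =>
    rw [hM.div_gen_monoid] at hd
    -- `d` right-divides `δ x g⁻¹ = (δ x δ⁻¹) (δ g⁻¹)`, which lies in `M_δ`
    have hgδ := hM.mem_divR_of_leR hδ hx hg (leR_trans (leR_mul_left hd g) hdx)
    refine Submonoid.mul_mem _ (ih (x := δ * x * g⁻¹) ?_ ?_) (subset_parM M δ hgδ)
    · simpa [mul_assoc] using Submonoid.mul_mem _ (hδ.conj_mem_parM hx)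
        (subset_parM M δ (hδ.mul_inv_mem_divR hgδ))
    · simpa [leR, mul_assoc] using M.mul_mem hδ.mem hdx

theorem mul_inv_mem_parM (hx : x ∈ parM M δ) (hy : y ∈ M) (hyx : leR M y x) :
    x * y⁻¹ ∈ parM M δ := by
  -- `x y⁻¹` right-divides `δ^m x y⁻¹ = (δ^m x δ^(-m)) (δ^m y⁻¹)`, which lies in `M_δ`
  obtain ⟨m, hm⟩ := hδ.exists_pow_mul_inv_mem_parM (hM.mem_parM_of_leR hδ hx hy hyx)
  refine hM.mem_parM_of_leR hδ (x := δ ^ m * (x * y⁻¹)) ?_ hyx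
    (leR_mul_left (M.pow_mem hδ.mem m) _)
  simpa [mul_assoc] using Submonoid.mul_mem _ (hδ.conj_pow_mem_parM hx m) hm

theorem exists_sup_mem_parM (hx : x ∈ parM M δ) (hy : y ∈ parM M δ) (hxa : leR M x a)
    (hya : leR M y a) : ∃ j ∈ parM M δ, leR M x j ∧ leR M y j ∧ leR M j a := by
  obtain ⟨j, hxj, hyj, hj⟩ := hM.exists_join x y
  obtain ⟨m, hm⟩ := hδ.exists_pow_mul_inv_mem_parM hx
  obtain ⟨n, hn⟩ := hδ.exists_pow_mul_inv_mem_parM hy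
  have hpow : ∀ {z} (k l : ℕ), δ ^ k * z⁻¹ ∈ parM M δ → leR M z (δ ^ (l + k)) := fun k l h => by
    simpa [leR, pow_add, mul_assoc] using M.mul_mem (M.pow_mem hδ.mem l) (parM_le M δ h)
  have hjδ : leR M j (δ ^ (n + m)) := hj _ (hpow m n hm) (add_comm m n ▸ hpow n m hn)
  exact ⟨j, hM.mem_parM_of_leR hδ (Submonoid.pow_mem _ hδ.self_mem_parM _)
    (mem_of_leR (parM_le M δ hx) hxj) hjδ, hxj, hyj, hj _ hxa hya⟩

theorem unmovable_of_mem_parM (hne : parM M δ ≠ M) (hx : x ∈ parM M δ) : Unmovable M Δ x := by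
  refine ⟨parM_le M δ hx, fun hΔx => hne (le_antisymm (parM_le M δ) ?_)⟩
  have hΔ := hM.mem_parM_of_leR hδ hx hM.delta_mem hΔx
  calc M = Submonoid.closure (DivR M Δ) := hM.div_gen_monoid.symm
    _ ≤ parM M δ := Submonoid.closure_le.2 fun g hg => hM.mem_parM_of_leR hδ hΔ hg.1 hg.2

theorem leR_pow_of_leR_delta_pow (hΔ : Δ ∈ Subgroup.center G) {k : ℕ} (hx : x ∈ parM M δ)
    (h : leR M x (Δ ^ k)) : leR M x (δ ^ k) := by
  induction k generalizing x with
  | zero =>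
    rw [pow_zero] at h ⊢
    rw [hM.eq_one_of_leR_one (parM_le M δ hx) h]
    exact leR_refl M 1
  | succ k ih =>
    obtain ⟨s, hsΔ, hsx, hxs⟩ := hM.exists_divR_leR_of_leR_pow_succ hΔ (parM_le M δ hx) h
    have hsδ := hM.mem_divR_of_leR hδ hx hsΔ hsx
    -- `δ^(k+1) x⁻¹ = (δ^k (δ s⁻¹) δ^(-k)) (δ^k (x s⁻¹)⁻¹)`
    have := M.mul_mem
      (parM_le M δ (hδ.conj_pow_mem_parM (subset_parM M δ (hδ.mul_inv_mem_divR hsδ)) k))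
      (ih (hM.mul_inv_mem_parM hδ hx hsΔ.1 hsx) hxs)
    simpa [leR, pow_succ, mul_assoc] using this

end IsGarsideOn

def IsTail (M N : Submonoid G) (a b : G) : Prop :=
  b ∈ N ∧ leR M b a ∧ ∀ c ∈ N, leR M c a → leR M c b

theorem isTail_self (ha : a ∈ N) : IsTail M N a a :=
  ⟨ha, leR_refl M a, fun _ _ h => h⟩

theorem IsTail.unique {car : Subgroup G} (hM : IsGarsideOn car M Δ) {b' : G}
    (h : IsTail M N a b) (h' : IsTail M N a b') : b = b' :=
  hM.leR_antisymm (h'.2.2 b h.1 h.2.1) (h.2.2 b' h'.1 h'.2.1)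

theorem isTail_tail (h : ∃ b, IsTail M N a b) : IsTail M N a (tail M N a) := by
  obtain ⟨b, hbN, hba, hb⟩ := h
  have hex : ∃ b ∈ N, {c | c ∈ N ∧ leR M c a} = {c | c ∈ N ∧ leR M c b} :=
    ⟨b, hbN, Set.ext fun c => ⟨fun hc => ⟨hc.1, hb c hc.1 hc.2⟩,
      fun hc => ⟨hc.1, leR_trans hc.2 hba⟩⟩⟩
  rw [tail, dif_pos hex]
  obtain ⟨hmem, hset⟩ := hex.choose_spec
  have key := fun c => Set.ext_iff.mp hset c
  exact ⟨hmem, ((key _).mpr ⟨hmem, leR_refl M _⟩).2, fun c hc hca => ((key c).mp ⟨hc, hca⟩).2⟩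

namespace IsGarsideOn

variable (hM : IsGarsideOn ⊤ M Δ) (hδ : IsParabolic M Δ δ)
include hM hδ

theorem exists_isTail (ha : a ∈ M) : ∃ b, IsTail M (parM M δ) a b := by
  -- a divisor in `M_δ` of maximal `maxLen` is the greatest one, since joins stay in `M_δ`
  obtain ⟨b, ⟨hb, hba⟩, hmax⟩ := (measure fun b => maxLen M a - maxLen M b).wf.has_min
    {b | b ∈ parM M δ ∧ leR M b a} ⟨1, Submonoid.one_mem _, leR_one_left.mpr ha⟩
  refine ⟨b, hb, hba, fun c hc hca => ?_⟩
  obtain ⟨j, hj, hcj, hbj, hja⟩ := hM.exists_sup_mem_parM hδ hc hb hca hba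
  obtain rfl : j = b := by
    by_contra hne
    have h1 := hM.maxLen_lt_of_leR (parM_le M δ hb) hbj (Ne.symm hne)
    have h2 := hM.maxLen_le_of_leR (parM_le M δ hj) hja
    exact hmax j ⟨hj, hja⟩ (show maxLen M a - maxLen M j < maxLen M a - maxLen M b by omega)
  exact hcj

theorem isTail_tail_parM (ha : a ∈ M) : IsTail M (parM M δ) a (tail M (parM M δ) a) :=
  isTail_tail (hM.exists_isTail hδ ha)

theorem tail_eq (h : IsTail M (parM M δ) a b) : tail M (parM M δ) a = b :=
  (hM.isTail_tail_parM hδ (mem_of_leR (parM_le M δ h.1) h.2.1)).unique hM h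

theorem isTail_mul (h : IsTail M (parM M δ) x b) (hy : y ∈ parM M δ) :
    IsTail M (parM M δ) (x * y) (b * y) := by
  have hyM := parM_le M δ hy
  have hxM := mem_of_leR (parM_le M δ h.1) h.2.1
  refine ⟨Submonoid.mul_mem _ h.1 hy, leR_mul_right_iff.mpr h.2.1, fun e he hexy => ?_⟩
  obtain ⟨f, hf, hef, hyf, hfxy⟩ := hM.exists_sup_mem_parM hδ he hy hexy (leR_mul_left hxM y)
  have hfx : leR M (f * y⁻¹) x := by
    rwa [← leR_mul_right_iff (c := y), inv_mul_cancel_right]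
  have hfb := h.2.2 _ (hM.mul_inv_mem_parM hδ hf hyM hyf) hfx
  rw [← leR_mul_right_iff (c := y), inv_mul_cancel_right] at hfb
  exact leR_trans hef hfb

end IsGarsideOn

end Parabolic

section Strip

variable {M M₁ N : Submonoid G} {a b : G}

theorem strip_add_two (a : G) (i : ℕ) :
    strip M M₁ N (i + 2) a = strip M M₁ N i (strip M M₁ N 2 a) := by
  induction i with
  | zero => rfl
  | succ i ih =>
    rw [show i + 1 + 2 = i + 2 + 1 from rfl, strip.eq_2 (i := i + 2), strip.eq_2 (i := i), ih,
      Nat.add_mod_right]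

theorem strip_succ_eq_of_strip_one_eq (h : strip M M₁ N 1 a = strip M M₁ N 1 b) (i : ℕ) :
    strip M M₁ N (i + 1) a = strip M M₁ N (i + 1) b := by
  induction i with
  | zero => exact h
  | succ i ih => rw [strip, ih]; rfl

theorem dpt_eq_of_strip_one_eq (h : strip M M₁ N 1 a = strip M M₁ N 1 b) :
    dpt M M₁ N a = dpt M M₁ N b := by
  have hset : {p | 1 ≤ p ∧ strip M M₁ N p a = 1} = {p | 1 ≤ p ∧ strip M M₁ N p b = 1} := by
    ext p
    refine and_congr_right fun hp => ?_
    obtain ⟨i, rfl⟩ := Nat.exists_eq_add_of_le' hp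
    rw [strip_succ_eq_of_strip_one_eq h]
  rw [dpt, dpt, bh, bh, hset]

end Strip

theorem exists_eq_pow_mul_of_mem_thetaBar {M₁ : Submonoid G} {θ x : G}
    (hx : x ∈ thetaBar M₁ θ) : ∃ p, ∃ x₀ ∈ M₁, x = θ ^ p * x₀ := by
  rcases hx with ⟨p, -, x₀, hx₀, rfl⟩ | hx
  · exact ⟨p, x₀, hx₀, rfl⟩
  · exact ⟨0, x, hx, by rw [pow_zero, one_mul]⟩

namespace Setting

variable (S : Setting G) {a b c x w : G}

theorem garsideTop (hcar : S.car = ⊤) : IsGarsideOn ⊤ S.M S.Δ :=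
  hcar ▸ S.garside

theorem delta_mem_center (hcar : S.car = ⊤) : S.Δ ∈ Subgroup.center G :=
  Subgroup.mem_center_iff.mpr fun g => (S.delta_central g (hcar ▸ Subgroup.mem_top g)).symm

theorem M₁_le : S.M₁ ≤ S.M := parM_le S.M S.δ1

theorem delta1_mem_M₁ : S.δ1 ∈ S.M₁ := S.par1.self_mem_parM

theorem delta1_ne_one : S.δ1 ≠ 1 := by
  intro h
  have hM₁ : S.M₁ ≤ ⊥ := Submonoid.closure_le.2 fun b hb => by
    rw [h] at hb
    exact S.garside.eq_one_of_leR_one hb.1 hb.2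
  refine S.N_ne (le_antisymm (parM_le S.M S.lam) ?_)
  calc S.M = Submonoid.closure ((S.Nsub : Set G) ∪ S.M₁) := S.unionGen.symm
    _ ≤ S.Nsub := Submonoid.closure_le.2 <| Set.union_subset subset_rfl fun x hx => by
      rw [Submonoid.mem_bot.mp (hM₁ hx)]
      exact S.Nsub.one_mem

theorem delta_ne_one : S.Δ ≠ 1 := fun h =>
  S.delta1_ne_one (S.garside.eq_one_of_leR_one S.par1.mem
    (h ▸ (S.par1.divR_subset S.par1.self_mem_divR).2))

theorem isTail_tail_M₁ (hcar : S.car = ⊤) (ha : a ∈ S.M) :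
    IsTail S.M S.M₁ a (tail S.M S.M₁ a) :=
  (S.garsideTop hcar).isTail_tail_parM S.par1 ha

theorem isTail_tail_Nsub (hcar : S.car = ⊤) (ha : a ∈ S.M) :
    IsTail S.M S.Nsub a (tail S.M S.Nsub a) :=
  (S.garsideTop hcar).isTail_tail_parM S.parH ha

theorem tail_M₁_eq (hcar : S.car = ⊤) (h : IsTail S.M S.M₁ a b) : tail S.M S.M₁ a = b :=
  (S.garsideTop hcar).tail_eq S.par1 h

theorem eq_one_of_isTail_one (ha : a ∈ S.M) (hM₁ : IsTail S.M S.M₁ a 1)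
    (hN : IsTail S.M S.Nsub a 1) : a = 1 := by
  have hgen : Submonoid.closure ((S.Nsub : Set G) ∪ S.M₁) = S.M := S.unionGen
  rw [← hgen] at ha
  induction ha using Submonoid.closure_induction_right with
  | one => rfl
  | mul_right x hx g hg ih =>
    rw [hgen] at hx
    have hg1 : g = 1 := by
      rcases hg with hg | hg
      · exact S.garside.eq_one_of_leR_one (parM_le _ _ hg) (hN.2.2 g hg (leR_mul_left hx g))
      · exact S.garside.eq_one_of_leR_one (S.M₁_le hg) (hM₁.2.2 g hg (leR_mul_left hx g))
    subst hg1
    rw [mul_one] at hM₁ hN ⊢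
    exact ih hM₁ hN

theorem strip_one (a : G) : strip S.M S.M₁ S.Nsub 1 a = a * (tail S.M S.M₁ a)⁻¹ := rfl

theorem exists_strip_eq_one (hcar : S.car = ⊤) (ha : a ∈ S.M) :
    ∃ p, 1 ≤ p ∧ strip S.M S.M₁ S.Nsub p a = 1 := by
  have hM := S.garsideTop hcar
  induction hn : maxLen S.M a using Nat.strong_induction_on generalizing a with
  | _ n ih =>
  by_cases ha1 : a = 1
  · subst ha1
    refine ⟨1, le_rfl, ?_⟩
    rw [strip_one, S.tail_M₁_eq hcar (isTail_self S.M₁.one_mem), mul_inv_cancel]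
  have h₁ := S.isTail_tail_M₁ hcar ha
  set τ₁ := tail S.M S.M₁ a
  have hb : a * τ₁⁻¹ ∈ S.M := h₁.2.1
  have h₂ := S.isTail_tail_Nsub hcar hb
  set τ₂ := tail S.M S.Nsub (a * τ₁⁻¹)
  have hc : a * τ₁⁻¹ * τ₂⁻¹ ∈ S.M := h₂.2.1
  have hτ : τ₁ ≠ 1 ∨ τ₂ ≠ 1 := by
    by_contra! h
    rw [h.1, inv_one, mul_one] at h₂
    exact ha1 (S.eq_one_of_isTail_one ha (h.1 ▸ h₁) (h.2 ▸ h₂))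
  have hlen : maxLen S.M (a * τ₁⁻¹ * τ₂⁻¹) < n := by
    have h1 := hM.maxLen_add_le hc (parM_le _ _ h₂.1)
    have h2 := hM.maxLen_add_le hb (S.M₁_le h₁.1)
    rw [inv_mul_cancel_right] at h1 h2
    rcases hτ with hτ | hτ
    · have := hM.one_le_maxLen (S.M₁_le h₁.1) hτ
      omega
    · have := hM.one_le_maxLen (parM_le _ _ h₂.1) hτ
      omega
  obtain ⟨q, hq, hqc⟩ := ih _ hlen hc rfl
  exact ⟨q + 2, by omega, by rw [strip_add_two]; exact hqc⟩

theorem mem_M₁_of_dpt_eq_zero (hcar : S.car = ⊤) (ha : a ∈ S.M)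
    (h : dpt S.M S.M₁ S.Nsub a = 0) : a ∈ S.M₁ := by
  obtain ⟨p, hp⟩ := S.exists_strip_eq_one hcar ha
  have hmem := Nat.sInf_mem (s := {p | 1 ≤ p ∧ strip S.M S.M₁ S.Nsub p a = 1}) ⟨p, hp⟩
  change 1 ≤ bh S.M S.M₁ S.Nsub a ∧ strip S.M S.M₁ S.Nsub (bh S.M S.M₁ S.Nsub a) a = 1 at hmem
  obtain ⟨hbh, hstrip⟩ := hmem
  have hbh1 : bh S.M S.M₁ S.Nsub a = 1 := by
    rw [dpt] at h
    omega
  rw [hbh1, strip_one, mul_inv_eq_one] at hstrip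
  exact hstrip ▸ (S.isTail_tail_M₁ hcar ha).1

theorem dpt_eq_zero_of_mem_M₁ (hcar : S.car = ⊤) (ha : a ∈ S.M₁) : dpt S.M S.M₁ S.Nsub a = 0 := by
  have hle : bh S.M S.M₁ S.Nsub a ≤ 1 := Nat.sInf_le
    ⟨le_rfl, by rw [strip_one, S.tail_M₁_eq hcar (isTail_self ha), mul_inv_cancel]⟩
  rw [dpt]
  omega

theorem mem_G₁_of_mem_M₁ (hx : x ∈ S.M₁) : x ∈ S.G₁ :=
  (Submonoid.closure_le (S := S.G₁.toSubmonoid).2 fun _ hy => Subgroup.subset_closure hy) hx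

theorem theta_mem : S.theta ∈ S.M := (S.par1.divR_subset S.par1.self_mem_divR).2

theorem theta_mul_delta1 : S.theta * S.δ1 = S.Δ := inv_mul_cancel_right S.Δ S.δ1

theorem commute_theta (hcar : S.car = ⊤) {g : G} (hg : g ∈ S.G₁) : Commute S.theta g :=
  Commute.mul_left (Subgroup.mem_center_iff.mp (S.delta_mem_center hcar) g).symm
    (Commute.inv_left (S.delta1_central g hg))

theorem theta_pow_mul_delta1_pow (hcar : S.car = ⊤) (k : ℕ) :
    S.theta ^ k * S.δ1 ^ k = S.Δ ^ k := by
  rw [← (S.commute_theta hcar (S.mem_G₁_of_mem_M₁ S.delta1_mem_M₁)).mul_pow, theta_mul_delta1]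

theorem eq_one_of_leR_theta_pow (hcar : S.car = ⊤) (hw : w ∈ S.M₁) {k : ℕ}
    (h : leR S.M w (S.theta ^ k)) : w = 1 := by
  have hM := S.garsideTop hcar
  have hΔ : leR S.M (w * S.δ1 ^ k) (S.Δ ^ k) := by
    rw [← S.theta_pow_mul_delta1_pow hcar]
    exact leR_mul_right_iff.mpr h
  have := hM.leR_pow_of_leR_delta_pow S.par1 (S.delta_mem_center hcar)
    (Submonoid.mul_mem _ hw (Submonoid.pow_mem _ S.delta1_mem_M₁ k)) hΔ
  exact hM.eq_one_of_leR_one (S.M₁_le hw)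
    ((leR_mul_right_iff (c := S.δ1 ^ k)).mp (by rwa [one_mul]))

theorem isTail_theta_pow_mul (hcar : S.car = ⊤) (hc : c ∈ S.M₁) (k : ℕ) :
    IsTail S.M S.M₁ (S.theta ^ k * c) c := by
  have h : IsTail S.M S.M₁ (S.theta ^ k) 1 :=
    ⟨S.M₁.one_mem, leR_one_left.mpr (S.M.pow_mem S.theta_mem k), fun w hw hwk => by
      rw [S.eq_one_of_leR_theta_pow hcar hw hwk]; exact leR_refl _ _⟩
  have := (S.garsideTop hcar).isTail_mul S.par1 h hc
  rwa [one_mul] at this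

theorem dpt_theta_pow_mul (hcar : S.car = ⊤) (hc : c ∈ S.M₁) (k : ℕ) :
    dpt S.M S.M₁ S.Nsub (S.theta ^ k * c) = dpt S.M S.M₁ S.Nsub (S.Δ ^ k) := by
  have hstrip : ∀ c ∈ S.M₁, strip S.M S.M₁ S.Nsub 1 (S.theta ^ k * c) = S.theta ^ k :=
    fun c hc => by rw [strip_one, S.tail_M₁_eq hcar (S.isTail_theta_pow_mul hcar hc k),
      mul_inv_cancel_right]
  apply dpt_eq_of_strip_one_eq
  rw [← S.theta_pow_mul_delta1_pow hcar, hstrip c hc,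
    hstrip _ (Submonoid.pow_mem _ S.delta1_mem_M₁ k)]

theorem exists_delta1_pow_mul_mem (hw : w ∈ S.G₁) : ∃ n, S.δ1 ^ n * w ∈ S.M₁ := by
  induction hw using Subgroup.closure_induction with
  | mem y hy => exact ⟨0, by rw [pow_zero, one_mul]; exact subset_parM S.M S.δ1 hy⟩
  | one => exact ⟨0, by simp⟩
  | mul x y hx _ ihx ihy =>
    obtain ⟨m, hm⟩ := ihx
    obtain ⟨n, hn⟩ := ihy
    refine ⟨m + n, ?_⟩
    have hcomm : S.δ1 ^ n * x = x * S.δ1 ^ n := (Commute.pow_left (S.delta1_central x hx) n).eq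
    have := Submonoid.mul_mem _ hm hn
    rwa [mul_assoc, ← mul_assoc x, ← hcomm, ← mul_assoc, ← mul_assoc, ← pow_add,
      mul_assoc] at this
  | inv x _ ihx =>
    obtain ⟨n, hn⟩ := ihx
    obtain ⟨m, hm⟩ := S.par1.exists_pow_mul_inv_mem_parM hn
    refine ⟨m, ?_⟩
    have h := Submonoid.mul_mem _ hm (Submonoid.pow_mem _ S.delta1_mem_M₁ n)
    rwa [mul_inv_rev, ← mul_assoc, inv_mul_cancel_right] at h

theorem mem_M₁_of_theta_pow_mul_mem (hcar : S.car = ⊤) (hw : w ∈ S.G₁) {j : ℕ}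
    (hz : S.theta ^ j * w ∈ S.M) : w ∈ S.M₁ := by
  have hM := S.garsideTop hcar
  obtain ⟨n, hn⟩ := S.exists_delta1_pow_mul_mem hw
  have hcomm : w * S.δ1 ^ n = S.δ1 ^ n * w := (Commute.pow_left (S.delta1_central w hw) n).eq.symm
  -- comparing the `M₁`-tails of `θ^j w δ₁^n = θ^j (δ₁^n w)` computed in two ways
  have h := hM.isTail_mul S.par1 (S.isTail_tail_M₁ hcar hz)
    (Submonoid.pow_mem _ S.delta1_mem_M₁ n)
  rw [mul_assoc, hcomm] at h
  have heq := h.unique hM (S.isTail_theta_pow_mul hcar hn j)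
  rw [← hcomm, mul_left_inj] at heq
  exact heq ▸ (S.isTail_tail_M₁ hcar hz).1

theorem unmovable_of_mem_M₁ (hcar : S.car = ⊤) (hx : x ∈ S.M₁) : Unmovable S.M S.Δ x :=
  (S.garsideTop hcar).unmovable_of_mem_parM S.par1 S.M1_ne hx

theorem unmovable_theta_pow_mul (hcar : S.car = ⊤) (hc : c ∈ S.M₁)
    (hδ1c : ¬ leR S.M S.δ1 c) (m : ℕ) : Unmovable S.M S.Δ (S.theta ^ m * c) := by
  cases m with
  | zero => simpa using S.unmovable_of_mem_M₁ hcar hc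
  | succ m =>
    refine ⟨S.M.mul_mem (S.M.pow_mem S.theta_mem _) (S.M₁_le hc), fun hΔ => hδ1c ?_⟩
    have hw : c * S.δ1⁻¹ ∈ S.G₁ := S.G₁.mul_mem (S.mem_G₁_of_mem_M₁ hc)
      (S.G₁.inv_mem (S.mem_G₁_of_mem_M₁ S.delta1_mem_M₁))
    have e : S.theta ^ (m + 1) * c * S.Δ⁻¹ = S.theta ^ m * (c * S.δ1⁻¹) :=
      calc S.theta ^ (m + 1) * c * S.Δ⁻¹
          = S.theta ^ m * (S.theta * (c * S.δ1⁻¹)) * S.theta⁻¹ := by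
            rw [← theta_mul_delta1, pow_succ]; group
        _ = S.theta ^ m * (c * S.δ1⁻¹) := by rw [(S.commute_theta hcar hw).eq]; group
    have hΔ' : S.theta ^ (m + 1) * c * S.Δ⁻¹ ∈ S.M := hΔ
    rw [e] at hΔ'
    exact S.M₁_le (S.mem_M₁_of_theta_pow_mul_mem hcar hw hΔ')

theorem exists_eq_mul_delta1_pow (hcar : S.car = ⊤) (hx : x ∈ S.M₁) :
    ∃ c s, c ∈ S.M₁ ∧ ¬ leR S.M S.δ1 c ∧ x = c * S.δ1 ^ s := by
  have hM := S.garsideTop hcar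
  obtain ⟨s, hs, hns⟩ := hM.exists_eq_mul_pow_not_leR S.par1.mem S.delta1_ne_one (S.M₁_le hx)
  exact ⟨x * (S.δ1 ^ s)⁻¹, s, hM.mul_inv_mem_parM S.par1 hx (S.M.pow_mem S.par1.mem s) hs,
    hns, by group⟩

/-- The `Δ`-form of `θ^n x` for `x ∈ M₁`: writing `x = c₀ δ₁^s` with `δ₁ ∤ c₀`, it is
`(θ^(n-s) c₀) Δ^s` if `s ≤ n` and `(c₀ δ₁^(s-n)) Δ^n` otherwise. -/
theorem exists_unmovable_theta_pow_mul_eq (hcar : S.car = ⊤) (hx : x ∈ S.M₁) (n : ℕ) :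
    ∃ c t, Unmovable S.M S.Δ c ∧ S.theta ^ n * x = c * S.Δ ^ t ∧ t ≤ n ∧
      dpt S.M S.M₁ S.Nsub c = dpt S.M S.M₁ S.Nsub (S.Δ ^ (n - t)) := by
  obtain ⟨c₀, s, hc₀, hred, rfl⟩ := S.exists_eq_mul_delta1_pow hcar hx
  rcases le_total s n with hsn | hns
  · obtain ⟨m, rfl⟩ := Nat.exists_eq_add_of_le hsn
    refine ⟨S.theta ^ m * c₀, s, S.unmovable_theta_pow_mul hcar hc₀ hred m, ?_, by omega,
      by rw [S.dpt_theta_pow_mul hcar hc₀, Nat.add_sub_cancel_left]⟩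
    calc S.theta ^ (s + m) * (c₀ * S.δ1 ^ s) = S.theta ^ m * (S.theta ^ s * c₀) * S.δ1 ^ s := by
          rw [add_comm, pow_add]; group
      _ = S.theta ^ m * c₀ * S.Δ ^ s := by
          rw [((S.commute_theta hcar (S.mem_G₁_of_mem_M₁ hc₀)).pow_left s).eq,
            ← S.theta_pow_mul_delta1_pow hcar]
          group
  · obtain ⟨m, rfl⟩ := Nat.exists_eq_add_of_le hns
    have hcm : c₀ * S.δ1 ^ m ∈ S.M₁ := S.M₁.mul_mem hc₀ (S.M₁.pow_mem S.delta1_mem_M₁ m)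
    refine ⟨c₀ * S.δ1 ^ m, n, S.unmovable_of_mem_M₁ hcar hcm, ?_, le_rfl, ?_⟩
    · calc S.theta ^ n * (c₀ * S.δ1 ^ (n + m))
            = S.theta ^ n * (c₀ * S.δ1 ^ m) * S.δ1 ^ n := by rw [add_comm, pow_add]; group
        _ = c₀ * S.δ1 ^ m * S.Δ ^ n := by
            rw [((S.commute_theta hcar (S.mem_G₁_of_mem_M₁ hcm)).pow_left n).eq,
              ← S.theta_pow_mul_delta1_pow hcar]
            group
    · rw [Nat.sub_self, pow_zero, S.dpt_eq_zero_of_mem_M₁ hcar hcm,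
        S.dpt_eq_zero_of_mem_M₁ hcar S.M₁.one_mem]

theorem mul_mem_Neg_of_mul_eq (hcar : S.car = ⊤) {α β a b c : G} {k l t : ℕ}
    (hα : α = a * (S.Δ ^ k)⁻¹) (hβ : β = b * (S.Δ ^ l)⁻¹) (hc : Unmovable S.M S.Δ c)
    (habc : a * b = c * S.Δ ^ t) (ht : t < k + l)
    (hdpt : dpt S.M S.M₁ S.Nsub c < dpt S.M S.M₁ S.Nsub (S.Δ ^ (k + l - t))) :
    α * β ∈ S.Neg := by
  refine ⟨c, k + l - t, hc, by omega, ?_, hdpt⟩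
  have hcomm : (S.Δ ^ k)⁻¹ * b = b * (S.Δ ^ k)⁻¹ :=
    (Commute.pow_left (Subgroup.mem_center_iff.mp (S.delta_mem_center hcar) b).symm k).inv_left.eq
  calc α * β = a * ((S.Δ ^ k)⁻¹ * b) * (S.Δ ^ l)⁻¹ := by rw [hα, hβ]; group
    _ = a * b * (S.Δ ^ t * S.Δ ^ (k + l - t))⁻¹ := by
      rw [hcomm, ← pow_add, Nat.add_sub_cancel' ht.le]; group
    _ = c * (S.Δ ^ (k + l - t))⁻¹ := by rw [habc]; group

theorem strictMono_dpt_delta_pow (hcar : S.car = ⊤) {ζ : ℕ} (hζ : 1 ≤ ζ) (hA : S.condA ζ) :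
    StrictMono fun m => dpt S.M S.M₁ S.Nsub (S.Δ ^ m) := by
  refine strictMono_nat_of_lt_succ fun m => ?_
  rcases m with _ | m
  · rw [hA 1 le_rfl, pow_zero, S.dpt_eq_zero_of_mem_M₁ hcar S.M₁.one_mem]
    omega
  · rw [hA _ (by omega), hA _ (by omega), mul_add ζ (m + 1) 1]
    omega

theorem mul_mem_Neg_of_mem_thetaBar (hcar : S.car = ⊤) {ζ : ℕ} (hζ : 1 ≤ ζ) (hA : S.condA ζ)
    {α β a b : G} {k l : ℕ} (hα : α = a * (S.Δ ^ k)⁻¹) (hβ : β = b * (S.Δ ^ l)⁻¹)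
    (hda : dpt S.M S.M₁ S.Nsub a < dpt S.M S.M₁ S.Nsub (S.Δ ^ k))
    (hdb : dpt S.M S.M₁ S.Nsub b < dpt S.M S.M₁ S.Nsub (S.Δ ^ l))
    (ha : a ∈ thetaBar S.M₁ S.theta) (hb : b ∈ thetaBar S.M₁ S.theta) : α * β ∈ S.Neg := by
  have hD := S.strictMono_dpt_delta_pow hcar hζ hA
  obtain ⟨p, a₀, ha₀, rfl⟩ := exists_eq_pow_mul_of_mem_thetaBar ha
  obtain ⟨q, b₀, hb₀, rfl⟩ := exists_eq_pow_mul_of_mem_thetaBar hb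
  rw [S.dpt_theta_pow_mul hcar ha₀] at hda
  rw [S.dpt_theta_pow_mul hcar hb₀] at hdb
  have hpk := hD.lt_iff_lt.mp hda
  have hql := hD.lt_iff_lt.mp hdb
  obtain ⟨c, t, hc, habc, htn, hdc⟩ :=
    S.exists_unmovable_theta_pow_mul_eq hcar (S.M₁.mul_mem ha₀ hb₀) (p + q)
  have hab : S.theta ^ p * a₀ * (S.theta ^ q * b₀) = S.theta ^ (p + q) * (a₀ * b₀) := by
    rw [pow_add, mul_assoc, ← mul_assoc a₀,
      ← ((S.commute_theta hcar (S.mem_G₁_of_mem_M₁ ha₀)).pow_left q).eq]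
    group
  exact S.mul_mem_Neg_of_mul_eq hcar hα hβ hc (hab.trans habc) (by omega)
    (hdc ▸ hD (by omega))

theorem mul_mem_Neg_of_not_mem_thetaBar (hcar : S.car = ⊤) {ζ : ℕ}
    (hA : S.condA ζ) (hB : S.condB ζ) {α β a b : G} {k l : ℕ} (ha : Unmovable S.M S.Δ a)
    (hb : Unmovable S.M S.Δ b) (hk : 1 ≤ k) (hl : 1 ≤ l) (hα : α = a * (S.Δ ^ k)⁻¹)
    (hβ : β = b * (S.Δ ^ l)⁻¹) (hda : dpt S.M S.M₁ S.Nsub a < dpt S.M S.M₁ S.Nsub (S.Δ ^ k))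
    (hdb : dpt S.M S.M₁ S.Nsub b < dpt S.M S.M₁ S.Nsub (S.Δ ^ l))
    (hab : ¬ (a ∈ thetaBar S.M₁ S.theta ∧ b ∈ thetaBar S.M₁ S.theta)) : α * β ∈ S.Neg := by
  obtain ⟨c, t, hc, habc⟩ :=
    (S.garsideTop hcar).exists_unmovable_mul_pow S.delta_ne_one (S.M.mul_mem ha.1 hb.1)
  obtain ⟨ε, -, heq, hε1⟩ := hB a b c t ha hb hab hc (by rw [habc, zpow_natCast])
  rw [hA k hk] at hda
  rw [hA l hl] at hdb
  have ht : t < k + l := by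
    by_contra! h
    have hζt : ζ * k + ζ * l ≤ ζ * t := mul_add ζ k l ▸ Nat.mul_le_mul_left ζ h
    have hc0 : dpt S.M S.M₁ S.Nsub c = 0 ∧ ε = 0 := by
      zify at hda hdb hζt
      omega
    have := hε1 (Or.inr (Or.inr (S.mem_M₁_of_dpt_eq_zero hcar hc.1 hc0.1)))
    omega
  refine S.mul_mem_Neg_of_mul_eq hcar hα hβ hc habc ht ?_
  rw [hA _ (by omega)]
  have hsplit : ζ * (k + l - t) + ζ * t = ζ * k + ζ * l := by
    rw [← mul_add, ← mul_add, Nat.sub_add_cancel ht.le]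
  zify [ht.le] at hsplit ⊢
  omega

end Setting

end GarsideOrder

open GarsideOrder in
/-- Assuming Conditions A and B with constant `ζ ≥ 1`, the product of two
`(H, G₁)`-negative elements is `(H, G₁)`-negative. -/
theorem statement5 {G : Type*} [Group G] (S : Setting G) (hcar : S.car = ⊤)
    (ζ : ℕ) (hζ : 1 ≤ ζ) (hA : S.condA ζ) (hB : S.condB ζ) :
    ∀ α ∈ S.Neg, ∀ β ∈ S.Neg, α * β ∈ S.Neg := by
  rintro α ⟨a, k, ha, hk, hα, hda⟩ β ⟨b, l, hb, hl, hβ, hdb⟩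
  by_cases hab : a ∈ thetaBar S.M₁ S.theta ∧ b ∈ thetaBar S.M₁ S.theta
  · exact S.mul_mem_Neg_of_mem_thetaBar hcar hζ hA hα hβ hda hdb hab.1 hab.2
  · exact S.mul_mem_Neg_of_not_mem_thetaBar hcar hA hB ha hb hk hl hα hβ hda hdb hab
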